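/- arXiv:2211.11192 — 10 statements merged into one kernel-verified Lean document; each statement's English description precedes it below -/
import Mathlib

section
/- Let F be a vector lattice and E ⊆ F. Then E is an ideal of F if and only if the set G = {(e,f) ∈ F × F : e − f ∈ E} is a vector sublattice of F × F. -/
variable {F : Type*} [Lattice F] [AddCommGroup F] [Module ℝ F]
  [CovariantClass F F (· + ·) (· ≤ ·)] [PosSMulMono ℝ F]

/-- A subset of a vector lattice is solid if it is nonempty and `|f| ≤ |e|`, `e ∈ E`
imply `f ∈ E`. -/
def Solid (E : Set F) : Prop :=
  E.Nonempty ∧ ∀ f e : F, e ∈ E → |f| ≤ |e| → f ∈ E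

/-- An ideal of a vector lattice: a solid linear subspace. -/
def IsIdeal (E : Set F) : Prop :=
  (0 : F) ∈ E ∧ (∀ x y : F, x ∈ E → y ∈ E → x + y ∈ E) ∧
    (∀ (c : ℝ) (x : F), x ∈ E → c • x ∈ E) ∧ Solid E

/-- The positive part of a set: its elements lying in the positive cone. -/
def posPart (E : Set F) : Set F := E ∩ {x : F | 0 ≤ x}

/-- The disjoint complement of a set. -/
def dComp (G : Set F) : Set F := {f : F | ∀ g ∈ G, |f| ⊓ |g| = 0}

/-- The principal ideal generated by `|e|`. -/
def pIdeal (e : F) : Set F := {f : F | ∃ α : ℝ, 0 ≤ α ∧ |f| ≤ α • |e|}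

/-- A vector sublattice: a linear subspace closed under the lattice operations. -/
def IsVecSublattice {G : Type*} [Lattice G] [AddCommGroup G] [Module ℝ G] (S : Set G) : Prop :=
  (0 : G) ∈ S ∧ (∀ x y : G, x ∈ S → y ∈ S → x + y ∈ S) ∧
    (∀ (c : ℝ) (x : G), x ∈ S → c • x ∈ S) ∧
    (∀ x y : G, x ∈ S → y ∈ S → x ⊔ y ∈ S) ∧ (∀ x y : G, x ∈ S → y ∈ S → x ⊓ y ∈ S)

/-- `E` is an ideal of `F` iff `{(e,f) : e − f ∈ E}` is a vector sublattice of `F × F`. -/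
theorem stmt3 (E : Set F) :
    IsIdeal E ↔ IsVecSublattice {p : F × F | p.1 - p.2 ∈ E} := by
  constructor
  · rintro ⟨h0, hadd, hsmul, ⟨-, hsolid⟩⟩
    have habs : ∀ x ∈ E, |x| ∈ E := fun x hx => hsolid |x| x hx (by rw [abs_abs])
    have key : ∀ p q : F × F, p.1 - p.2 ∈ E → q.1 - q.2 ∈ E →
        ∀ t : F, |t| ≤ |p.1 - p.2| + |q.1 - q.2| → t ∈ E := by
      intro p q hp hq t ht
      have hE : |p.1 - p.2| + |q.1 - q.2| ∈ E := hadd _ _ (habs _ hp) (habs _ hq)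
      exact hsolid t _ hE (ht.trans_eq
        (abs_of_nonneg (add_nonneg (abs_nonneg _) (abs_nonneg _))).symm)
    refine ⟨by simpa using h0, ?_, ?_, ?_, ?_⟩
    · intro x y hx hy
      simpa [sub_add_sub_comm] using hadd _ _ hx hy
    · intro c x hx
      simpa [← smul_sub] using hsmul c _ hx
    · intro x y hx hy
      refine key x y hx hy _ ?_
      rw [Prod.sup_def]
      calc |x.1 ⊔ y.1 - (x.2 ⊔ y.2)|
          = |(x.1 ⊔ y.1 - (x.2 ⊔ y.1)) + ((x.2 ⊔ y.1) - (x.2 ⊔ y.2))| := by rw [sub_add_sub_cancel]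
        _ ≤ |x.1 ⊔ y.1 - (x.2 ⊔ y.1)| + |(x.2 ⊔ y.1) - (x.2 ⊔ y.2)| := abs_add_le _ _
        _ ≤ |x.1 - x.2| + |y.1 - y.2| :=
            add_le_add (abs_sup_sub_sup_le_abs x.1 x.2 y.1)
              (by rw [sup_comm x.2 y.1, sup_comm x.2 y.2]
                  exact abs_sup_sub_sup_le_abs y.1 y.2 x.2)
    · intro x y hx hy
      refine key x y hx hy _ ?_
      rw [Prod.inf_def]
      calc |x.1 ⊓ y.1 - (x.2 ⊓ y.2)|
          = |(x.1 ⊓ y.1 - (x.2 ⊓ y.1)) + ((x.2 ⊓ y.1) - (x.2 ⊓ y.2))| := by rw [sub_add_sub_cancel]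
        _ ≤ |x.1 ⊓ y.1 - (x.2 ⊓ y.1)| + |(x.2 ⊓ y.1) - (x.2 ⊓ y.2)| := abs_add_le _ _
        _ ≤ |x.1 - x.2| + |y.1 - y.2| :=
            add_le_add (abs_inf_sub_inf_le_abs x.1 x.2 y.1)
              (by rw [inf_comm x.2 y.1, inf_comm x.2 y.2]
                  exact abs_inf_sub_inf_le_abs y.1 y.2 x.2)
  · rintro ⟨h0, hadd, hsmul, hsup, hinf⟩
    have mem_iff : ∀ x : F, x ∈ E ↔ ((x, 0) : F × F) ∈
        {p : F × F | p.1 - p.2 ∈ E} := by intro x; simp [Set.mem_setOf_eq]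
    have h0E : (0 : F) ∈ E := by rw [mem_iff]; exact h0
    have haddE : ∀ x y : F, x ∈ E → y ∈ E → x + y ∈ E := by
      intro x y hx hy
      rw [mem_iff] at hx hy ⊢
      simpa using hadd _ _ hx hy
    have hsmulE : ∀ (c : ℝ) (x : F), x ∈ E → c • x ∈ E := by
      intro c x hx
      rw [mem_iff] at hx ⊢
      simpa [Prod.smul_def] using hsmul c _ hx
    have habsE : ∀ x ∈ E, |x| ∈ E := by
      intro x hx
      have hneg : -x ∈ E := by simpa using hsmulE (-1) x hx
      rw [mem_iff] at hx hneg ⊢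
      have := hsup _ _ hx hneg
      simpa [Prod.sup_def, abs] using this
    -- 0 ≤ h ≤ g, g ∈ E → h ∈ E
    have hsq : ∀ g h : F, g ∈ E → 0 ≤ h → h ≤ g → h ∈ E := by
      intro g h hg h0h hhg
      have hgG : ((g, 0) : F × F) ∈ {p : F × F | p.1 - p.2 ∈ E} := (mem_iff g).mp hg
      have hhG : ((h, h) : F × F) ∈ {p : F × F | p.1 - p.2 ∈ E} := by
        simp [Set.mem_setOf_eq, h0E]
      have := hinf _ _ hgG hhG
      rw [Prod.inf_def] at this
      simp only [Set.mem_setOf_eq] at this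
      rw [inf_of_le_right hhg, inf_of_le_left h0h] at this
      simpa using this
    refine ⟨h0E, haddE, hsmulE, ⟨⟨0, h0E⟩, ?_⟩⟩
    intro f e he hfe
    have hgE : |e| ∈ E := habsE e he
    have hle1 : f⁺ ≤ |f| := by
      rw [← posPart_add_negPart f]; exact le_add_of_nonneg_right (negPart_nonneg f)
    have hle2 : f⁻ ≤ |f| := by
      rw [← posPart_add_negPart f]; exact le_add_of_nonneg_left (posPart_nonneg f)
    have hpos : f⁺ ∈ E := hsq |e| f⁺ hgE (posPart_nonneg f) (hle1.trans hfe)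
    have hneg : f⁻ ∈ E := hsq |e| f⁻ hgE (negPart_nonneg f) (hle2.trans hfe)
    rw [← posPart_sub_negPart f, sub_eq_add_neg]
    exact haddE _ _ hpos (by simpa using hsmulE (-1) _ hneg)
end

section
/- Let F be a vector lattice, H an ideal of F, and g ∈ F. Then H ∩ I_g is a projection band in the principal ideal I_g if and only if g ∈ H + H^d. Consequently, H is a projection band in F if and only if H ∩ I_g is a projection band in I_g for every g ∈ F. -/
open Pointwise

variable {F : Type*} [Lattice F] [AddCommGroup F] [Module ℝ F]
  [CovariantClass F F (· + ·) (· ≤ ·)] [PosSMulMono ℝ F]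

-- auxiliary lemmas
set_option linter.unusedSectionVars false

lemma aux_inf_add_le (a b c : F) (ha : 0 ≤ a) (hb : 0 ≤ b) (hc : 0 ≤ c) :
    (a + b) ⊓ c ≤ a ⊓ c + b ⊓ c := by
  set d := (a + b) ⊓ c with hd
  have h1 : d - a ≤ b := by
    rw [sub_le_iff_le_add, add_comm]; exact inf_le_left
  have h2 : d - a ≤ c := (sub_le_self d ha).trans inf_le_right
  have h3 : d - b ⊓ c ≤ a := by
    rw [sub_le_iff_le_add, add_comm, ← sub_le_iff_le_add]
    exact le_inf h1 h2
  have h4 : d - b ⊓ c ≤ c := (sub_le_self d (le_inf hb hc)).trans inf_le_right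
  have h5 := le_inf h3 h4
  rw [sub_le_iff_le_add] at h5
  exact h5

lemma aux_nsmul_inf (n : ℕ) (a c : F) (ha : 0 ≤ a) (hc : 0 ≤ c) (h : a ⊓ c = 0) :
    (n • a) ⊓ c = 0 := by
  induction n with
  | zero => simp [inf_eq_left.mpr hc]
  | succ n ih =>
      refine le_antisymm ?_ (le_inf (nsmul_nonneg ha _) hc)
      calc ((n + 1) • a) ⊓ c = (n • a + a) ⊓ c := by rw [succ_nsmul]
        _ ≤ (n • a) ⊓ c + a ⊓ c := aux_inf_add_le _ _ _ (nsmul_nonneg ha n) ha hc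
        _ = 0 := by rw [ih, h, add_zero]

lemma aux_rsmul_inf (α : ℝ) (a c : F) (hα : 0 ≤ α) (ha : 0 ≤ a) (hc : 0 ≤ c)
    (h : a ⊓ c = 0) : (α • a) ⊓ c = 0 := by
  have hle : α • a ≤ ⌈α⌉₊ • a := by
    rw [← Nat.cast_smul_eq_nsmul ℝ, ← sub_nonneg, ← sub_smul]
    exact smul_nonneg (sub_nonneg.2 (Nat.le_ceil α)) ha
  refine le_antisymm ?_ (le_inf (smul_nonneg hα ha) hc)
  calc (α • a) ⊓ c ≤ (⌈α⌉₊ • a) ⊓ c := inf_le_inf_right c hle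
    _ = 0 := aux_nsmul_inf _ _ _ ha hc h

/-- Riesz decomposition. -/
lemma aux_riesz (y A B : F) (hy : 0 ≤ y) (hA : 0 ≤ A) (hB : 0 ≤ B) (h : y ≤ A + B) :
    ∃ u v : F, 0 ≤ u ∧ u ≤ A ∧ u ≤ y ∧ 0 ≤ v ∧ v ≤ B ∧ v ≤ y ∧ y = u + v := by
  refine ⟨y ⊓ A, y - y ⊓ A, le_inf hy hA, inf_le_right, inf_le_left, ?_, ?_, ?_, by abel⟩
  · rw [sub_nonneg]; exact inf_le_left
  · rw [sub_inf]
    exact sup_le (by simpa using hB) (by rw [sub_le_iff_le_add, add_comm]; exact h)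
  · exact (sub_le_self y (le_inf hy hA))

/-- `H ∩ I_g` is a projection band in the principal ideal `I_g` iff `g ∈ H + H^d`;
consequently `H` is a projection band in `F` iff `H ∩ I_g` is a projection band in
`I_g` for every `g ∈ F`. -/
theorem stmt8 (H : Set F) (hH : IsIdeal H) :
    (∀ g : F,
      (∀ x ∈ pIdeal g, ∃ b ∈ H ∩ pIdeal g,
          ∃ c ∈ dComp (H ∩ pIdeal g) ∩ pIdeal g, x = b + c) ↔ g ∈ H + dComp H) ∧
    (H + dComp H = Set.univ ↔
      ∀ g : F, ∀ x ∈ pIdeal g, ∃ b ∈ H ∩ pIdeal g,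
        ∃ c ∈ dComp (H ∩ pIdeal g) ∩ pIdeal g, x = b + c) := by
  obtain ⟨h0, hadd, hsmul, -, hsolid⟩ := hH
  have key : ∀ g : F,
      (∀ x ∈ pIdeal g, ∃ b ∈ H ∩ pIdeal g,
          ∃ c ∈ dComp (H ∩ pIdeal g) ∩ pIdeal g, x = b + c) ↔ g ∈ H + dComp H := by
    intro g
    constructor
    · intro hP
      obtain ⟨b, ⟨hbH, -⟩, c, ⟨hcD, hcI⟩, hgbc⟩ :=
        hP g ⟨1, zero_le_one, by rw [one_smul]⟩
      rw [Set.mem_add]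
      refine ⟨b, hbH, c, ?_, hgbc.symm⟩
      intro h hh
      set m := |c| ⊓ |h| with hm
      have hm0 : 0 ≤ m := le_inf (abs_nonneg c) (abs_nonneg h)
      have hmabs : |m| = m := abs_of_nonneg hm0
      have hmH : m ∈ H := hsolid m h hh (by rw [hmabs]; exact inf_le_right)
      have hmI : m ∈ pIdeal g := by
        obtain ⟨α, hα, hcle⟩ := hcI
        exact ⟨α, hα, by rw [hmabs]; exact le_trans inf_le_left hcle⟩
      have h5 := hcD m ⟨hmH, hmI⟩
      rw [hmabs, inf_comm, inf_eq_left.mpr (inf_le_left : m ≤ |c|)] at h5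
      exact h5
    · rintro hg x ⟨α, hα, hxle⟩
      rw [Set.mem_add] at hg
      obtain ⟨h, hhH, d, hdD, hhd⟩ := hg
      -- |x| ≤ α • |h| + α • |d|
      have hgabs : |g| ≤ |h| + |d| := by rw [← hhd]; exact abs_add_le h d
      have hxle' : |x| ≤ α • |h| + α • |d| := by
        calc |x| ≤ α • |g| := hxle
          _ ≤ α • (|h| + |d|) := smul_le_smul_of_nonneg_left hgabs hα
          _ = α • |h| + α • |d| := smul_add α _ _
      have habsH : ∀ k ∈ H, |k| ∈ H := fun k hk => hsolid |k| k hk (by rw [abs_abs])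
      have hAH : α • |h| ∈ H := hsmul α |h| (habsH h hhH)
      have hA0 : (0:F) ≤ α • |h| := smul_nonneg hα (abs_nonneg h)
      have hB0 : (0:F) ≤ α • |d| := smul_nonneg hα (abs_nonneg d)
      -- decompose positive and negative parts
      have decomp : ∀ y : F, 0 ≤ y → y ≤ |x| →
          ∃ u v : F, u ∈ H ∧ 0 ≤ u ∧ u ≤ y ∧ 0 ≤ v ∧ v ≤ α • |d| ∧ v ≤ y ∧ y = u + v := by
        intro y hy hyx
        obtain ⟨u, v, hu0, huA, huy, hv0, hvB, hvy, heq⟩ :=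
          aux_riesz y (α • |h|) (α • |d|) hy hA0 hB0 (hyx.trans hxle')
        refine ⟨u, v, ?_, hu0, huy, hv0, hvB, hvy, heq⟩
        exact hsolid u (α • |h|) hAH
          (by rw [abs_of_nonneg hu0, abs_of_nonneg hA0]; exact huA)
      have hxp : (0:F) ≤ x ⊔ 0 := le_sup_right
      have hxn : (0:F) ≤ (-x) ⊔ 0 := le_sup_right
      have hxpa : x ⊔ 0 ≤ |x| := sup_le (le_abs_self x) (abs_nonneg x)
      have hxna : (-x) ⊔ 0 ≤ |x| := sup_le (neg_le_abs x) (abs_nonneg x)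
      obtain ⟨u₁, v₁, hu₁H, hu₁0, hu₁y, hv₁0, hv₁B, hv₁y, heq₁⟩ := decomp _ hxp hxpa
      obtain ⟨u₂, v₂, hu₂H, hu₂0, hu₂y, hv₂0, hv₂B, hv₂y, heq₂⟩ := decomp _ hxn hxna
      -- x = (u₁ - u₂) + (v₁ - v₂)
      have hxdecomp : x = (u₁ - u₂) + (v₁ - v₂) := by
        have : x ⊔ 0 - ((-x) ⊔ 0) = x := by
          have h1 : (-x) ⊔ 0 = -(x ⊓ 0) := by rw [neg_inf, neg_zero]
          rw [h1, sub_neg_eq_add, add_comm, inf_add_sup, add_zero]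
        rw [← this, heq₁, heq₂]; abel
      -- membership in pIdeal g
      have hIg : ∀ w₁ w₂ : F, 0 ≤ w₁ → w₁ ≤ |x| → 0 ≤ w₂ → w₂ ≤ |x| →
          w₁ - w₂ ∈ pIdeal g := by
        intro w₁ w₂ h1 h2 h3 h4
        refine ⟨α + α, by linarith, ?_⟩
        calc |w₁ - w₂| ≤ |w₁| + |w₂| := by
              rw [sub_eq_add_neg]
              simpa using abs_add_le w₁ (-w₂)
          _ = w₁ + w₂ := by rw [abs_of_nonneg h1, abs_of_nonneg h3]
          _ ≤ α • |g| + α • |g| := add_le_add (h2.trans hxle) (h4.trans hxle)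
          _ = (α + α) • |g| := (add_smul α α |g|).symm
      have hbH' : u₁ - u₂ ∈ H := by
        have := hadd u₁ ((-1 : ℝ) • u₂) hu₁H (hsmul (-1) u₂ hu₂H)
        simpa [sub_eq_add_neg] using this
      have hbI : u₁ - u₂ ∈ pIdeal g :=
        hIg u₁ u₂ hu₁0 (hu₁y.trans hxpa) hu₂0 (hu₂y.trans hxna)
      have hcI : v₁ - v₂ ∈ pIdeal g :=
        hIg v₁ v₂ hv₁0 (hv₁y.trans hxpa) hv₂0 (hv₂y.trans hxna)
      -- disjointness of v₁ - v₂ from H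
      have hcD : v₁ - v₂ ∈ dComp H := by
        intro k hk
        have hdk : |d| ⊓ |k| = 0 := hdD k hk
        have hBk : (α • |d|) ⊓ |k| = 0 :=
          aux_rsmul_inf α |d| |k| hα (abs_nonneg d) (abs_nonneg k) hdk
        have hv₁k : v₁ ⊓ |k| = 0 := by
          refine le_antisymm ?_ (le_inf hv₁0 (abs_nonneg k))
          calc v₁ ⊓ |k| ≤ (α • |d|) ⊓ |k| := inf_le_inf_right _ hv₁B
            _ = 0 := hBk
        have hv₂k : v₂ ⊓ |k| = 0 := by
          refine le_antisymm ?_ (le_inf hv₂0 (abs_nonneg k))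
          calc v₂ ⊓ |k| ≤ (α • |d|) ⊓ |k| := inf_le_inf_right _ hv₂B
            _ = 0 := hBk
        refine le_antisymm ?_ (le_inf (abs_nonneg _) (abs_nonneg k))
        calc |v₁ - v₂| ⊓ |k| ≤ (v₁ + v₂) ⊓ |k| := by
              refine inf_le_inf_right _ ?_
              calc |v₁ - v₂| ≤ |v₁| + |v₂| := by
                    rw [sub_eq_add_neg]
                    simpa using abs_add_le v₁ (-v₂)
                _ = v₁ + v₂ := by rw [abs_of_nonneg hv₁0, abs_of_nonneg hv₂0]
          _ ≤ v₁ ⊓ |k| + v₂ ⊓ |k| := aux_inf_add_le _ _ _ hv₁0 hv₂0 (abs_nonneg k)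
          _ = 0 := by rw [hv₁k, hv₂k, add_zero]
      exact ⟨u₁ - u₂, ⟨hbH', hbI⟩, v₁ - v₂,
        ⟨fun w hw => hcD w hw.1, hcI⟩, hxdecomp⟩
  refine ⟨key, ?_⟩
  constructor
  · intro huniv g x hx
    exact (key g).mpr (huniv ▸ Set.mem_univ g) x hx
  · intro hall
    rw [Set.eq_univ_iff_forall]
    exact fun g => (key g).mp (fun x hx => hall g x hx)
end

section
/- Let F be an Archimedean vector lattice, E an order dense and majorizing vector sublattice of F, and H an ideal of F such that G = E ∩ H is a projection band in E. Then H is a projection band in F. -/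
open Pointwise

variable {F : Type*} [Lattice F] [AddCommGroup F] [Module ℝ F]
  [CovariantClass F F (· + ·) (· ≤ ·)] [PosSMulMono ℝ F]

/-- Riesz-type inequality: for nonneg elements, `(a + b) ⊓ x ≤ a ⊓ x + b ⊓ x`. -/
theorem inf_add_le_aux {a b x : F} (ha : 0 ≤ a) (hb : 0 ≤ b) (hx : 0 ≤ x) :
    (a + b) ⊓ x ≤ a ⊓ x + b ⊓ x := by
  rw [← sub_le_iff_le_add']
  rw [sub_inf]
  apply sup_le
  · exact le_inf (sub_le_iff_le_add'.2 inf_le_left)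
      (sub_le_iff_le_add'.2 (inf_le_right.trans (le_add_of_nonneg_left ha)))
  · exact (sub_nonpos.2 inf_le_right).trans (le_inf hb hx)

/-- If `E` is an order dense and majorizing sublattice of an Archimedean vector lattice
`F`, `H` is an ideal of `F`, and `E ∩ H` is a projection band in `E`, then `H` is a
projection band in `F`. -/
theorem stmt9 (hArch : ∀ f g : F, 0 ≤ f → (∀ n : ℕ, n • g ≤ f) → g ≤ 0)
    (E H : Set F)
    (hE0 : (0 : F) ∈ E) (hEadd : ∀ x y : F, x ∈ E → y ∈ E → x + y ∈ E)
    (hEsmul : ∀ (c : ℝ) (x : F), x ∈ E → c • x ∈ E)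
    (hEsup : ∀ x y : F, x ∈ E → y ∈ E → x ⊔ y ∈ E)
    (hEinf : ∀ x y : F, x ∈ E → y ∈ E → x ⊓ y ∈ E)
    (hdense : ∀ f : F, 0 ≤ f → f ≠ 0 → ∃ e ∈ E, 0 < e ∧ e ≤ f)
    (hmaj : ∀ f : F, 0 ≤ f → ∃ e ∈ E, f ≤ e)
    (hH : IsIdeal H)
    (hproj : ∀ x ∈ E, ∃ b ∈ E ∩ H, ∃ c ∈ dComp (E ∩ H) ∩ E, x = b + c) :
    H + dComp H = Set.univ := by
  obtain ⟨hH0, hHadd, hHsmul, -, hHsolid⟩ := hH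
  -- decomposition for nonnegative elements
  have hpos : ∀ f : F, 0 ≤ f → ∃ h ∈ H, ∃ d ∈ dComp H, f = h + d := by
    intro f hf
    obtain ⟨e, heE, hfe⟩ := hmaj f hf
    obtain ⟨b, hbEH, c, ⟨hcm, hcE⟩, hebc⟩ := hproj e heE
    -- c is disjoint from all of H
    have hcd : c ∈ dComp H := by
      intro h hh
      by_contra hne
      have hw : 0 ≤ |c| ⊓ |h| := le_inf (abs_nonneg c) (abs_nonneg h)
      obtain ⟨e', he'E, he'pos, he'le⟩ := hdense _ hw hne
      have he'abs : |e'| = e' := abs_of_nonneg he'pos.le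
      have he'H : e' ∈ H := hHsolid e' h hh (by
        rw [he'abs]; exact he'le.trans inf_le_right)
      have h0 : |c| ⊓ |e'| = 0 := hcm e' ⟨he'E, he'H⟩
      have : e' ≤ 0 := by
        have : e' ≤ |c| ⊓ |e'| := le_inf (he'le.trans inf_le_left) (le_abs_self e')
        rwa [h0] at this
      exact absurd he'pos (by simpa using this.not_gt)
    refine ⟨f - f ⊓ c, ?_, f ⊓ c, ?_, by abel⟩
    · -- f - f ⊓ c ∈ H since it is dominated by |b|
      apply hHsolid _ b hbEH.2
      have hnn : 0 ≤ f - f ⊓ c := sub_nonneg.2 inf_le_left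
      rw [abs_of_nonneg hnn, sub_inf, sub_self]
      refine sup_le (abs_nonneg b) ?_
      have h4 : f - c ≤ e - c := sub_le_sub_right hfe c
      have hb : e - c = b := by rw [hebc]; abel
      rw [hb] at h4
      exact h4.trans (le_abs_self b)
    · -- f ⊓ c ∈ dComp H since |f ⊓ c| ≤ |c|
      intro h hh
      have hle : |f ⊓ c| ≤ |c| := by
        rw [abs_le']
        constructor
        · exact inf_le_right.trans (le_abs_self c)
        · rw [neg_inf]
          exact sup_le ((neg_nonpos.2 hf).trans (abs_nonneg c)) (neg_le_abs c)
      have := hcd h hh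
      have h1 : |f ⊓ c| ⊓ |h| ≤ 0 := by
        calc |f ⊓ c| ⊓ |h| ≤ |c| ⊓ |h| := inf_le_inf_right _ hle
        _ = 0 := this
      exact le_antisymm h1 (le_inf (abs_nonneg _) (abs_nonneg _))
  -- now the general case
  rw [Set.eq_univ_iff_forall]
  intro f
  obtain ⟨h₁, hh₁, d₁, hd₁, hf₁⟩ := hpos f⁺ (posPart_nonneg f)
  obtain ⟨h₂, hh₂, d₂, hd₂, hf₂⟩ := hpos f⁻ (negPart_nonneg f)
  rw [Set.mem_add]
  refine ⟨h₁ - h₂, ?_, d₁ - d₂, ?_, ?_⟩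
  · have : -h₂ ∈ H := by
      have := hHsmul (-1) h₂ hh₂
      rwa [neg_one_smul] at this
    have := hHadd h₁ (-h₂) hh₁ this
    rwa [← sub_eq_add_neg] at this
  · intro h hh
    have e1 := hd₁ h hh
    have e2 := hd₂ h hh
    have hle : |d₁ - d₂| ⊓ |h| ≤ (|d₁| + |d₂|) ⊓ |h| :=
      inf_le_inf_right _ (by
        rw [sub_eq_add_neg]
        exact (abs_add_le d₁ (-d₂)).trans (by rw [abs_neg]))
    have h2 : (|d₁| + |d₂|) ⊓ |h| ≤ |d₁| ⊓ |h| + |d₂| ⊓ |h| :=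
      inf_add_le_aux (abs_nonneg _) (abs_nonneg _) (abs_nonneg _)
    have h3 : |d₁ - d₂| ⊓ |h| ≤ 0 := by
      calc |d₁ - d₂| ⊓ |h| ≤ |d₁| ⊓ |h| + |d₂| ⊓ |h| := hle.trans h2
      _ = 0 := by rw [e1, e2, add_zero]
    exact le_antisymm h3 (le_inf (abs_nonneg _) (abs_nonneg _))
  · have := posPart_sub_negPart f
    rw [hf₁, hf₂] at this
    rw [← this]; abel
end

section
/- Let F be a vector lattice. The set H = {h ∈ F : the principal ideal I_h has the principal projection property} is an ideal of F, and H itself has the principal projection property. -/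
set_option linter.unusedSectionVars false


open Pointwise

variable {F : Type*} [Lattice F] [AddCommGroup F] [Module ℝ F]
  [CovariantClass F F (· + ·) (· ≤ ·)] [PosSMulMono ℝ F]

/-- The disjoint complement of `S` relative to the sublattice `G`. -/
def dC (G S : Set F) : Set F := {f : F | f ∈ G ∧ ∀ s ∈ S, |f| ⊓ |s| = 0}

/-- A sublattice `G` (viewed as a vector lattice in its own right) has the principal
projection property: for every `e ∈ G`, the band of `G` generated by `e` is a
projection band in `G`. -/
def HasPPPOn (G : Set F) : Prop :=
  ∀ e ∈ G, ∀ x ∈ G, ∃ b ∈ dC G (dC G {e}), ∃ c ∈ dC G (dC G (dC G {e})), x = b + c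

/-! ### Auxiliary machinery -/

/-- `b` lies in the band generated by `e` (in the absolute sense). -/
def InBandF (e b : F) : Prop := ∀ s : F, |s| ⊓ |e| = 0 → |b| ⊓ |s| = 0

/-- Reformulated principal projection property. -/
def Reform (G : Set F) : Prop :=
  ∀ e ∈ G, ∀ x ∈ G, ∃ b c : F,
    b ∈ G ∧ c ∈ G ∧ InBandF e b ∧ |c| ⊓ |e| = 0 ∧ x = b + c

lemma inf_add_le3 {a b c : F} (ha : 0 ≤ a) (hb : 0 ≤ b) (hc : 0 ≤ c) :
    a ⊓ (b + c) ≤ a ⊓ b + a ⊓ c := by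
  rw [add_inf, inf_add, inf_add]
  refine le_inf (le_inf ?_ ?_) (le_inf ?_ ?_)
  · exact le_trans inf_le_left (le_add_of_nonneg_right ha)
  · exact le_trans inf_le_left (le_add_of_nonneg_left hb)
  · exact le_trans inf_le_left (le_add_of_nonneg_right hc)
  · exact inf_le_right

lemma abs_le_abs_add_of_disj {a b : F} (h : |a| ⊓ |b| = 0) : |a| ≤ |a + b| := by
  have h1 : |a| ≤ |a + b| + |b| := by
    calc |a| = |a + b + -b| := by rw [add_neg_cancel_right]
    _ ≤ |a + b| + |(-b)| := abs_add_le _ _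
    _ = |a + b| + |b| := by rw [abs_neg]
  calc |a| = |a| ⊓ (|a + b| + |b|) := (inf_eq_left.2 h1).symm
  _ ≤ |a| ⊓ |a + b| + |a| ⊓ |b| := inf_add_le3 (abs_nonneg _) (abs_nonneg _) (abs_nonneg _)
  _ = |a| ⊓ |a + b| := by rw [h, add_zero]
  _ ≤ |a + b| := inf_le_right

lemma disj_mono_left {a a' w : F} (h : |a'| ≤ |a|) (haw : |a| ⊓ |w| = 0) : |a'| ⊓ |w| = 0 :=
  le_antisymm ((inf_le_inf_right _ h).trans haw.le) (le_inf (abs_nonneg _) (abs_nonneg _))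

lemma disj_mono_right {a w w' : F} (h : |w'| ≤ |w|) (haw : |a| ⊓ |w| = 0) : |a| ⊓ |w'| = 0 :=
  le_antisymm ((inf_le_inf_left _ h).trans haw.le) (le_inf (abs_nonneg _) (abs_nonneg _))

lemma disj_add' {u v w : F} (hu : |u| ⊓ |w| = 0) (hv : |v| ⊓ |w| = 0) :
    |u + v| ⊓ |w| = 0 := by
  refine le_antisymm ?_ (le_inf (abs_nonneg _) (abs_nonneg _))
  calc |u + v| ⊓ |w| ≤ (|u| + |v|) ⊓ |w| := inf_le_inf_right _ (abs_add_le u v)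
  _ = |w| ⊓ (|u| + |v|) := inf_comm _ _
  _ ≤ |w| ⊓ |u| + |w| ⊓ |v| := inf_add_le3 (abs_nonneg _) (abs_nonneg _) (abs_nonneg _)
  _ = 0 := by rw [inf_comm |w| |u|, inf_comm |w| |v|, hu, hv, add_zero]

lemma inBand_add {e u v : F} (hu : InBandF e u) (hv : InBandF e v) : InBandF e (u + v) :=
  fun s hs => disj_add' (hu s hs) (hv s hs)

lemma disj_pair {a u v : F} (hu : 0 ≤ u) (hv : 0 ≤ v) (h1 : |a| ⊓ u = 0) (h2 : |a| ⊓ v = 0) :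
    |a| ⊓ (u + v) = 0 :=
  le_antisymm ((inf_add_le3 (abs_nonneg a) hu hv).trans
    ((by rw [h1, h2, add_zero] : |a| ⊓ u + |a| ⊓ v = (0:F)).le))
    (le_inf (abs_nonneg a) (add_nonneg hu hv))

lemma riesz_pos {z a b : F} (hz : 0 ≤ z) (ha : 0 ≤ a) (hb : 0 ≤ b) (hzab : z ≤ a + b) :
    ∃ z₁ z₂ : F, 0 ≤ z₁ ∧ z₁ ≤ a ∧ 0 ≤ z₂ ∧ z₂ ≤ b ∧ z = z₁ + z₂ := by
  refine ⟨z ⊓ a, z - z ⊓ a, le_inf hz ha, inf_le_right, sub_nonneg.2 inf_le_left, ?_, by abel⟩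
  have h : z - z ⊓ a = 0 ⊔ (z - a) := by
    rw [sub_eq_add_neg, neg_inf, add_sup, add_neg_cancel, ← sub_eq_add_neg]
  rw [h]
  exact sup_le hb (sub_le_iff_le_add'.2 hzab)

lemma riesz_gen {x a b : F} (ha : 0 ≤ a) (hb : 0 ≤ b) (hx : |x| ≤ a + b) :
    ∃ x₁ x₂ : F, |x₁| ≤ a + a ∧ |x₂| ≤ b + b ∧ x = x₁ + x₂ := by
  have hple : x⁺ ≤ |x| := by
    rw [posPart_def]; exact sup_le (le_abs_self x) (abs_nonneg x)
  have hnle : x⁻ ≤ |x| := by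
    rw [negPart_def]; exact sup_le (neg_le_abs x) (abs_nonneg x)
  obtain ⟨p₁, p₂, hp₁0, hp₁, hp₂0, hp₂, hp⟩ :=
    riesz_pos (posPart_nonneg x) ha hb (hple.trans hx)
  obtain ⟨n₁, n₂, hn₁0, hn₁, hn₂0, hn₂, hn⟩ :=
    riesz_pos (negPart_nonneg x) ha hb (hnle.trans hx)
  refine ⟨p₁ - n₁, p₂ - n₂, ?_, ?_, ?_⟩
  · exact abs_le'.2 ⟨(sub_le_self _ hn₁0).trans (hp₁.trans (le_add_of_nonneg_right ha)),
      by rw [neg_sub]; exact (sub_le_self _ hp₁0).trans (hn₁.trans (le_add_of_nonneg_right ha))⟩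
  · exact abs_le'.2 ⟨(sub_le_self _ hn₂0).trans (hp₂.trans (le_add_of_nonneg_right hb)),
      by rw [neg_sub]; exact (sub_le_self _ hp₂0).trans (hn₂.trans (le_add_of_nonneg_right hb))⟩
  · rw [← posPart_sub_negPart x, hp, hn]; abel

lemma rsmul_nonneg {r : ℝ} (hr : 0 ≤ r) {x : F} (hx : 0 ≤ x) : 0 ≤ r • x := by
  simpa using smul_le_smul_of_nonneg_left hx hr

lemma abs_smul_le'' {r : ℝ} (hr : 0 ≤ r) (x : F) : |r • x| ≤ r • |x| := by
  refine abs_le'.2 ⟨smul_le_smul_of_nonneg_left (le_abs_self x) hr, ?_⟩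
  rw [← smul_neg]
  exact smul_le_smul_of_nonneg_left (neg_le_abs x) hr

lemma abs_smul_le' (r : ℝ) (x : F) : |r • x| ≤ |r| • |x| := by
  rcases le_total 0 r with hr | hr
  · rw [abs_of_nonneg hr]; exact abs_smul_le'' hr x
  · have h : r • x = -((-r) • x) := by rw [neg_smul, neg_neg]
    rw [h, abs_neg, abs_of_nonpos hr]
    exact abs_smul_le'' (neg_nonneg.2 hr) x

lemma pIdeal_solid (h : F) : ∀ f e : F, e ∈ pIdeal h → |f| ≤ |e| → f ∈ pIdeal h := by
  rintro f e ⟨α, hα, he⟩ hfe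
  exact ⟨α, hα, hfe.trans he⟩

lemma pIdeal_mono {f h : F} (hfh : |f| ≤ |h|) : pIdeal f ⊆ pIdeal h := by
  rintro g ⟨α, hα, hg⟩
  exact ⟨α, hα, hg.trans (smul_le_smul_of_nonneg_left hfh hα)⟩

lemma pIdeal_abs (h : F) : pIdeal |h| = pIdeal h := by
  unfold pIdeal; rw [abs_abs]

lemma pIdeal_smul_subset (r : ℝ) (x : F) : pIdeal (r • x) ⊆ pIdeal x := by
  rintro g ⟨α, hα, hg⟩
  refine ⟨α * |r|, mul_nonneg hα (abs_nonneg r), ?_⟩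
  calc |g| ≤ α • |r • x| := hg
  _ ≤ α • (|r| • |x|) := smul_le_smul_of_nonneg_left (abs_smul_le' r x) hα
  _ = (α * |r|) • |x| := smul_smul α |r| |x|

lemma reform_mono {G G' : Set F} (hsub : G' ⊆ G)
    (hsolid : ∀ f e : F, e ∈ G' → |f| ≤ |e| → f ∈ G') (hG : Reform G) : Reform G' := by
  intro e he x hx
  obtain ⟨b, c, hbG, hcG, hband, hdisj, hxbc⟩ := hG e (hsub he) x (hsub hx)
  have hbc : |b| ⊓ |c| = 0 := hband c hdisj
  have hble : |b| ≤ |x| := by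
    have := abs_le_abs_add_of_disj hbc; rwa [← hxbc] at this
  have hcle : |c| ≤ |x| := by
    have := abs_le_abs_add_of_disj (a := c) (b := b) (by rw [inf_comm]; exact hbc)
    rwa [add_comm, ← hxbc] at this
  exact ⟨b, c, hsolid b x hx hble, hsolid c x hx hcle, hband, hdisj, hxbc⟩

lemma hasPPPOn_of_reform {G : Set F} (h : Reform G) : HasPPPOn G := by
  intro e he x hx
  obtain ⟨b, c, hbG, hcG, hband, hdisj, hxbc⟩ := h e he x hx
  refine ⟨b, ⟨hbG, ?_⟩, c, ⟨hcG, ?_⟩, hxbc⟩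
  · rintro s ⟨hsG, hs⟩
    exact hband s (hs e (Set.mem_singleton e))
  · rintro s ⟨hsG, hs⟩
    have hc : c ∈ dC G {e} := by
      refine ⟨hcG, ?_⟩
      rintro t ht
      rw [Set.mem_singleton_iff] at ht
      rw [ht]; exact hdisj
    have h1 := hs c hc
    rw [inf_comm] at h1
    exact h1

lemma reform_of_hasPPPOn {G : Set F}
    (hsolid : ∀ f e : F, e ∈ G → |f| ≤ |e| → f ∈ G)
    (h : HasPPPOn G) : Reform G := by
  intro e he x hx
  obtain ⟨b, ⟨hbG, hb⟩, c, ⟨hcG, hc⟩, hxbc⟩ := h e he x hx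
  refine ⟨b, c, hbG, hcG, ?_, ?_, hxbc⟩
  · intro s hs
    set t := |b| ⊓ |s| with ht
    have ht0 : (0:F) ≤ t := le_inf (abs_nonneg _) (abs_nonneg _)
    have htb : |t| ≤ |b| := by rw [abs_of_nonneg ht0]; exact inf_le_left
    have htG : t ∈ G := hsolid t b hbG htb
    have htdC : t ∈ dC G {e} := by
      refine ⟨htG, ?_⟩
      rintro u hu
      rw [Set.mem_singleton_iff] at hu
      subst hu
      rw [abs_of_nonneg ht0]
      exact le_antisymm ((inf_le_inf_right _ inf_le_right).trans hs.le)
        (le_inf ht0 (abs_nonneg _))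
    have h1 := hb t htdC
    rw [abs_of_nonneg ht0] at h1
    calc t = |b| ⊓ t := (inf_eq_right.2 inf_le_left).symm
    _ = 0 := h1
  · have heB : e ∈ dC G (dC G {e}) := by
      refine ⟨he, ?_⟩
      rintro s ⟨hsG, hs⟩
      have h1 := hs e (Set.mem_singleton e)
      rw [inf_comm]; exact h1
    exact hc e heB

lemma reform_pIdeal_add {h₁ h₂ : F} (hh₁ : 0 ≤ h₁) (hh₂ : 0 ≤ h₂)
    (H₁ : Reform (pIdeal h₁)) (H₂ : Reform (pIdeal h₂)) :
    Reform (pIdeal (h₁ + h₂)) := by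
  intro e he x hx
  have heI := he; have hxI := hx
  obtain ⟨β, hβ, heb⟩ := he
  obtain ⟨α, hα, hxa⟩ := hx
  have habs : |h₁ + h₂| = h₁ + h₂ := abs_of_nonneg (add_nonneg hh₁ hh₂)
  rw [habs, smul_add] at heb hxa
  have habs₁ : |h₁| = h₁ := abs_of_nonneg hh₁
  have habs₂ : |h₂| = h₂ := abs_of_nonneg hh₂
  have hβ1 : (0:F) ≤ β • h₁ := rsmul_nonneg hβ hh₁
  have hβ2 : (0:F) ≤ β • h₂ := rsmul_nonneg hβ hh₂
  have hα1 : (0:F) ≤ α • h₁ := rsmul_nonneg hα hh₁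
  have hα2 : (0:F) ≤ α • h₂ := rsmul_nonneg hα hh₂
  obtain ⟨e₁, e₂, he₁0, he₁, he₂0, he₂, heq⟩ := riesz_pos (abs_nonneg e) hβ1 hβ2 heb
  obtain ⟨x₁, x₂, hx₁, hx₂, hxeq⟩ := riesz_gen hα1 hα2 hxa
  -- memberships in the two principal ideals
  have hx₁I : x₁ ∈ pIdeal h₁ :=
    ⟨α + α, add_nonneg hα hα, by rw [habs₁, add_smul]; exact hx₁⟩
  have hx₂I : x₂ ∈ pIdeal h₂ :=
    ⟨α + α, add_nonneg hα hα, by rw [habs₂, add_smul]; exact hx₂⟩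
  have he₁I : e₁ ∈ pIdeal h₁ := ⟨β, hβ, by rw [habs₁, abs_of_nonneg he₁0]; exact he₁⟩
  have he₂I : e₂ ∈ pIdeal h₂ := ⟨β, hβ, by rw [habs₂, abs_of_nonneg he₂0]; exact he₂⟩
  -- first projections
  obtain ⟨b₁, c₁, hb₁I, hc₁I, hb₁band, hc₁disj, hx₁bc⟩ := H₁ e₁ he₁I x₁ hx₁I
  obtain ⟨b₂, c₂, hb₂I, hc₂I, hb₂band, hc₂disj, hx₂bc⟩ := H₂ e₂ he₂I x₂ hx₂I
  -- second projections
  set w₁ := |c₁| ⊓ e₂ with hw₁def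
  have hw₁0 : (0:F) ≤ w₁ := le_inf (abs_nonneg _) he₂0
  have hw₁I : w₁ ∈ pIdeal h₁ :=
    pIdeal_solid h₁ w₁ c₁ hc₁I (by rw [abs_of_nonneg hw₁0]; exact inf_le_left)
  obtain ⟨b₁', c₁', hb₁'I, hc₁'I, hb₁'band, hc₁'disj, hc₁bc⟩ := H₁ w₁ hw₁I c₁ hc₁I
  set w₂ := |c₂| ⊓ e₁ with hw₂def
  have hw₂0 : (0:F) ≤ w₂ := le_inf (abs_nonneg _) he₁0
  have hw₂I : w₂ ∈ pIdeal h₂ :=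
    pIdeal_solid h₂ w₂ c₂ hc₂I (by rw [abs_of_nonneg hw₂0]; exact inf_le_left)
  obtain ⟨b₂', c₂', hb₂'I, hc₂'I, hb₂'band, hc₂'disj, hc₂bc⟩ := H₂ w₂ hw₂I c₂ hc₂I
  -- disjointness facts for the remainders
  have hb₁'c₁' : |b₁'| ⊓ |c₁'| = 0 := hb₁'band c₁' hc₁'disj
  have hb₂'c₂' : |b₂'| ⊓ |c₂'| = 0 := hb₂'band c₂' hc₂'disj
  have hc₁'le : |c₁'| ≤ |c₁| := by
    have := abs_le_abs_add_of_disj (a := c₁') (b := b₁') (by rw [inf_comm]; exact hb₁'c₁')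
    rwa [add_comm, ← hc₁bc] at this
  have hc₂'le : |c₂'| ≤ |c₂| := by
    have := abs_le_abs_add_of_disj (a := c₂') (b := b₂') (by rw [inf_comm]; exact hb₂'c₂')
    rwa [add_comm, ← hc₂bc] at this
  have hc₁'e₂ : |c₁'| ⊓ e₂ = 0 := by
    have h1 : |c₁'| ⊓ e₂ ≤ |c₁'| ⊓ |w₁| := by
      rw [abs_of_nonneg hw₁0]
      exact le_inf inf_le_left (le_inf (inf_le_left.trans hc₁'le) inf_le_right)
    exact le_antisymm (h1.trans hc₁'disj.le) (le_inf (abs_nonneg _) he₂0)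
  have hc₁'e₁ : |c₁'| ⊓ e₁ = 0 := by
    have h1 : |c₁'| ⊓ e₁ ≤ |c₁| ⊓ |e₁| := by
      rw [abs_of_nonneg he₁0]
      exact inf_le_inf_right _ hc₁'le
    exact le_antisymm (h1.trans hc₁disj.le) (le_inf (abs_nonneg _) he₁0)
  have hc₂'e₁ : |c₂'| ⊓ e₁ = 0 := by
    have h1 : |c₂'| ⊓ e₁ ≤ |c₂'| ⊓ |w₂| := by
      rw [abs_of_nonneg hw₂0]
      exact le_inf inf_le_left (le_inf (inf_le_left.trans hc₂'le) inf_le_right)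
    exact le_antisymm (h1.trans hc₂'disj.le) (le_inf (abs_nonneg _) he₁0)
  have hc₂'e₂ : |c₂'| ⊓ e₂ = 0 := by
    have h1 : |c₂'| ⊓ e₂ ≤ |c₂| ⊓ |e₂| := by
      rw [abs_of_nonneg he₂0]
      exact inf_le_inf_right _ hc₂'le
    exact le_antisymm (h1.trans hc₂disj.le) (le_inf (abs_nonneg _) he₂0)
  have hc₁'e : |c₁'| ⊓ |e| = 0 := by
    rw [heq]; exact disj_pair he₁0 he₂0 hc₁'e₁ hc₁'e₂
  have hc₂'e : |c₂'| ⊓ |e| = 0 := by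
    rw [heq]; exact disj_pair he₁0 he₂0 hc₂'e₁ hc₂'e₂
  -- band facts
  have he₁le : |e₁| ≤ |e| := by
    rw [abs_of_nonneg he₁0, heq]; exact le_add_of_nonneg_right he₂0
  have he₂le : |e₂| ≤ |e| := by
    rw [abs_of_nonneg he₂0, heq]; exact le_add_of_nonneg_left he₁0
  have hw₁le : |w₁| ≤ |e| := by
    rw [abs_of_nonneg hw₁0]
    exact inf_le_right.trans (by rw [← abs_of_nonneg he₂0]; exact he₂le)
  have hw₂le : |w₂| ≤ |e| := by
    rw [abs_of_nonneg hw₂0]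
    exact inf_le_right.trans (by rw [← abs_of_nonneg he₁0]; exact he₁le)
  have hb₁band' : InBandF e b₁ := fun s hs => hb₁band s (disj_mono_right he₁le hs)
  have hb₂band' : InBandF e b₂ := fun s hs => hb₂band s (disj_mono_right he₂le hs)
  have hb₁'band' : InBandF e b₁' := fun s hs => hb₁'band s (disj_mono_right hw₁le hs)
  have hb₂'band' : InBandF e b₂' := fun s hs => hb₂'band s (disj_mono_right hw₂le hs)
  -- assemble
  set b := b₁ + b₁' + (b₂ + b₂') with hbdef
  set c := c₁' + c₂' with hcdef
  have hband : InBandF e b :=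
    inBand_add (inBand_add hb₁band' hb₁'band') (inBand_add hb₂band' hb₂'band')
  have hce : |c| ⊓ |e| = 0 := disj_add' hc₁'e hc₂'e
  have hxbc : x = b + c := by
    rw [hxeq, hx₁bc, hx₂bc, hc₁bc, hc₂bc, hbdef, hcdef]; abel
  have hbc : |b| ⊓ |c| = 0 := hband c hce
  have hble : |b| ≤ |x| := by
    have := abs_le_abs_add_of_disj hbc; rwa [← hxbc] at this
  have hcle : |c| ≤ |x| := by
    have := abs_le_abs_add_of_disj (a := c) (b := b) (by rw [inf_comm]; exact hbc)
    rwa [add_comm, ← hxbc] at this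
  exact ⟨b, c, pIdeal_solid _ b x hxI hble, pIdeal_solid _ c x hxI hcle, hband, hce, hxbc⟩

lemma zero_mem_pIdeal (h : F) : (0:F) ∈ pIdeal h :=
  ⟨0, le_refl 0, by rw [abs_zero, zero_smul]⟩

lemma reform_pIdeal_zero : Reform (pIdeal (0:F)) := by
  intro e he x hx
  obtain ⟨α, hα, hxa⟩ := hx
  have hx0 : x = 0 := by
    rw [abs_zero, smul_zero] at hxa
    exact le_antisymm ((le_abs_self x).trans hxa)
      (neg_nonpos.1 ((neg_le_abs x).trans hxa))
  refine ⟨0, 0, zero_mem_pIdeal _, zero_mem_pIdeal _, ?_, ?_, by rw [hx0, add_zero]⟩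
  · intro s hs
    rw [abs_zero]
    exact inf_eq_left.2 (abs_nonneg s)
  · rw [abs_zero]
    exact inf_eq_left.2 (abs_nonneg e)

/-- The set of `h` such that the principal ideal `I_h` has the principal projection
property is an ideal which itself has the principal projection property. -/
theorem stmt10 :
    IsIdeal {h : F | HasPPPOn (pIdeal h)} ∧ HasPPPOn {h : F | HasPPPOn (pIdeal h)} := by
  have key : ∀ h : F, HasPPPOn (pIdeal h) ↔ Reform (pIdeal h) :=
    fun h => ⟨reform_of_hasPPPOn (pIdeal_solid h), hasPPPOn_of_reform⟩
  have h0 : (0:F) ∈ {h : F | HasPPPOn (pIdeal h)} := (key 0).2 reform_pIdeal_zero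
  have hadd : ∀ x y : F, x ∈ {h : F | HasPPPOn (pIdeal h)} →
      y ∈ {h : F | HasPPPOn (pIdeal h)} → x + y ∈ {h : F | HasPPPOn (pIdeal h)} := by
    intro x y hx hy
    have hx' : Reform (pIdeal |x|) := by rw [pIdeal_abs]; exact (key x).1 hx
    have hy' : Reform (pIdeal |y|) := by rw [pIdeal_abs]; exact (key y).1 hy
    have hsum : Reform (pIdeal (|x| + |y|)) :=
      reform_pIdeal_add (abs_nonneg x) (abs_nonneg y) hx' hy'
    have hsub : pIdeal (x + y) ⊆ pIdeal (|x| + |y|) := pIdeal_mono (by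
      rw [abs_of_nonneg (add_nonneg (abs_nonneg x) (abs_nonneg y))]
      exact abs_add_le x y)
    exact (key (x + y)).2 (reform_mono hsub (pIdeal_solid _) hsum)
  have hsmul : ∀ (c : ℝ) (x : F), x ∈ {h : F | HasPPPOn (pIdeal h)} →
      c • x ∈ {h : F | HasPPPOn (pIdeal h)} := fun c x hx =>
    (key _).2 (reform_mono (pIdeal_smul_subset c x) (pIdeal_solid _) ((key x).1 hx))
  have hsolidH : ∀ f e : F, e ∈ {h : F | HasPPPOn (pIdeal h)} → |f| ≤ |e| →
      f ∈ {h : F | HasPPPOn (pIdeal h)} := fun f e heH hfe =>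
    (key f).2 (reform_mono (pIdeal_mono hfe) (pIdeal_solid f) ((key e).1 heH))
  have habsH : ∀ x : F, x ∈ {h : F | HasPPPOn (pIdeal h)} →
      |x| ∈ {h : F | HasPPPOn (pIdeal h)} := by
    intro x hx
    show HasPPPOn (pIdeal |x|)
    rw [pIdeal_abs]
    exact hx
  refine ⟨⟨h0, hadd, hsmul, ⟨0, h0⟩, hsolidH⟩, hasPPPOn_of_reform ?_⟩
  intro e heH x hxH
  have hg : (|e| + |x|) ∈ {h : F | HasPPPOn (pIdeal h)} :=
    hadd _ _ (habsH e heH) (habsH x hxH)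
  have hgR : Reform (pIdeal (|e| + |x|)) := (key _).1 hg
  have hgabs : |(|e| + |x|)| = |e| + |x| :=
    abs_of_nonneg (add_nonneg (abs_nonneg e) (abs_nonneg x))
  have heg : e ∈ pIdeal (|e| + |x|) :=
    ⟨1, zero_le_one, by rw [one_smul, hgabs]; exact le_add_of_nonneg_right (abs_nonneg x)⟩
  have hxg : x ∈ pIdeal (|e| + |x|) :=
    ⟨1, zero_le_one, by rw [one_smul, hgabs]; exact le_add_of_nonneg_left (abs_nonneg e)⟩
  obtain ⟨b, c, hbI, hcI, hband, hce, hxbc⟩ := hgR e heg x hxg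
  have hbc : |b| ⊓ |c| = 0 := hband c hce
  have hble : |b| ≤ |x| := by
    have := abs_le_abs_add_of_disj hbc; rwa [← hxbc] at this
  have hcle : |c| ≤ |x| := by
    have := abs_le_abs_add_of_disj (a := c) (b := b) (by rw [inf_comm]; exact hbc)
    rwa [add_comm, ← hxbc] at this
  exact ⟨b, c, hsolidH b x hxH hble, hsolidH c x hxH hcle, hband, hce, hxbc⟩
end

section
/- Let F be an Archimedean vector lattice and H a projection band in F. Then for any family 𝒥 of ideals of F, ⋂_{J ∈ 𝒥} (H + J) = H + ⋂ 𝒥; that is, H is an infinite meet-distributive element of the lattice of ideals of F. -/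
open Pointwise

variable {F : Type*} [Lattice F] [AddCommGroup F] [Module ℝ F]
  [CovariantClass F F (· + ·) (· ≤ ·)] [PosSMulMono ℝ F]

lemma inf_add_le_aux_s11 {u v w : F} (hu : 0 ≤ u) (hv : 0 ≤ v) (hw : 0 ≤ w) :
    (u + v) ⊓ w ≤ u ⊓ w + v ⊓ w := by
  have h1 : (u + v) ⊓ w ≤ u ⊓ w + v := by
    rw [inf_add]
    exact inf_le_inf_left _ (le_add_of_nonneg_right hv)
  have h2 : (u + v) ⊓ w ≤ u ⊓ w + w :=
    inf_le_right.trans (le_add_of_nonneg_left (le_inf hu hw))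
  calc (u + v) ⊓ w ≤ (u ⊓ w + v) ⊓ (u ⊓ w + w) := le_inf h1 h2
    _ = u ⊓ w + v ⊓ w := (add_inf v w (u ⊓ w)).symm

lemma abs_eq_zero_aux {x : F} (h : |x| = 0) : x = 0 :=
  le_antisymm (h ▸ le_abs_self x) (neg_nonpos.mp (h ▸ neg_le_abs x))

lemma abs_le_abs_add_of_disjoint {x y : F} (h : |x| ⊓ |y| = 0) : |y| ≤ |x + y| := by
  have h1 : |y| ≤ |x + y| + |x| := by
    have := abs_add_le (x + y) (-x)
    simpa [abs_neg] using this
  have h2 : |y| = (|x + y| + |x|) ⊓ |y| := (inf_eq_right.mpr h1).symm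
  calc |y| = (|x + y| + |x|) ⊓ |y| := h2
    _ ≤ |x + y| ⊓ |y| + |x| ⊓ |y| :=
        inf_add_le_aux_s11 (abs_nonneg _) (abs_nonneg _) (abs_nonneg _)
    _ = |x + y| ⊓ |y| := by rw [h, add_zero]
    _ ≤ |x + y| := inf_le_left

lemma ideal_sub {E : Set F} (hE : IsIdeal E) {x y : F} (hx : x ∈ E) (hy : y ∈ E) :
    x - y ∈ E := by
  have : (-1 : ℝ) • y ∈ E := hE.2.2.1 (-1) y hy
  rw [neg_one_smul] at this
  simpa [sub_eq_add_neg] using hE.2.1 x (-y) hx this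

lemma dComp_sub {G : Set F} {a b : F} (ha : a ∈ dComp G) (hb : b ∈ dComp G) :
    a - b ∈ dComp G := by
  intro g hg
  have habs : |a - b| ≤ |a| + |b| := by
    have := abs_add_le a (-b)
    simpa [sub_eq_add_neg, abs_neg] using this
  refine le_antisymm ?_ (le_inf (abs_nonneg _) (abs_nonneg _))
  calc |a - b| ⊓ |g| ≤ (|a| + |b|) ⊓ |g| := inf_le_inf_right _ habs
    _ ≤ |a| ⊓ |g| + |b| ⊓ |g| := inf_add_le_aux_s11 (abs_nonneg _) (abs_nonneg _) (abs_nonneg _)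
    _ = 0 := by rw [ha g hg, hb g hg, add_zero]

lemma mem_H_dComp_eq_zero {H : Set F} {x : F} (hx : x ∈ H) (hx' : x ∈ dComp H) : x = 0 := by
  have := hx' x hx
  rw [inf_idem] at this
  exact abs_eq_zero_aux this

/-- If `H` is a projection band in an Archimedean vector lattice `F`, then for any
family `𝒥` of ideals of `F`, `⋂_{J ∈ 𝒥} (H + J) = H + ⋂ 𝒥`. -/
theorem stmt11 (hArch : ∀ f g : F, 0 ≤ f → (∀ n : ℕ, n • g ≤ f) → g ≤ 0)
    (H : Set F) (hH : IsIdeal H) (hproj : H + dComp H = Set.univ)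
    (𝒥 : Set (Set F)) (h𝒥 : ∀ J ∈ 𝒥, IsIdeal J) :
    ⋂ J ∈ 𝒥, (H + J) = H + ⋂₀ 𝒥 := by
  apply Set.Subset.antisymm
  · intro f hf
    obtain ⟨h₀, hh₀, d₀, hd₀, hf0⟩ := Set.mem_add.mp (hproj ▸ Set.mem_univ f)
    refine Set.mem_add.mpr ⟨h₀, hh₀, d₀, ?_, hf0⟩
    intro J hJ
    have hfJ : f ∈ H + J := Set.mem_iInter₂.mp hf J hJ
    obtain ⟨h, hh, j, hj, hfj⟩ := Set.mem_add.mp hfJ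
    obtain ⟨h₁, hh₁, d₁, hd₁, hjd⟩ := Set.mem_add.mp (hproj ▸ Set.mem_univ j)
    -- d₀ = d₁
    have key : h₀ + d₀ = h + h₁ + d₁ := by rw [hf0, ← hfj, ← hjd, add_assoc]
    have hsub : d₀ - d₁ = h + h₁ - h₀ :=
      sub_eq_sub_iff_add_eq_add.mpr (by rw [add_comm d₀ h₀, key])
    have hmemH : d₀ - d₁ ∈ H := by
      rw [hsub]; exact ideal_sub hH (hH.2.1 h h₁ hh hh₁) hh₀
    have heq : d₀ = d₁ :=
      sub_eq_zero.mp (mem_H_dComp_eq_zero hmemH (dComp_sub hd₀ hd₁))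
    -- d₁ ∈ J by solidity
    have hdisj : |h₁| ⊓ |d₁| = 0 := by
      have := hd₁ h₁ hh₁
      rwa [inf_comm] at this
    have habs : |d₁| ≤ |j| := by
      rw [← hjd]
      exact abs_le_abs_add_of_disjoint hdisj
    rw [heq]
    exact (h𝒥 J hJ).2.2.2.2 d₁ j hj habs
  · intro f hf
    obtain ⟨h, hh, g, hg, hfg⟩ := Set.mem_add.mp hf
    refine Set.mem_iInter₂.mpr fun J hJ => Set.mem_add.mpr ⟨h, hh, g, hg J hJ, hfg⟩
end

section
/- Let F be an Archimedean vector lattice and H an ideal of F. If every subset G of H⁺ that is order bounded in F is order bounded in H (i.e., has an upper bound lying in H), then H is a projection band. -/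
/-! For `0 ≤ f`, an upper bound in `H` of `H ∩ [0, f]` can be cut down to a greatest element `m`
of that set. Then `f - m` is disjoint from `H`: for `g ∈ H`, the element `(f - m) ⊓ |g|` of `H`
can be added to `m` without leaving `H ∩ [0, f]`, so it vanishes. Hence `f = m + (f - m)` splits
`f`, and an arbitrary `f` splits as `f⁺ - f⁻`. -/

open Pointwise

variable {F : Type*} [Lattice F] [AddCommGroup F] [Module ℝ F]
  [CovariantClass F F (· + ·) (· ≤ ·)] [PosSMulMono ℝ F]

section LatticeOrderedGroup

variable {α : Type*} [Lattice α] [AddCommGroup α]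

lemma add_inf_le_inf_add_inf [AddLeftMono α] {a b c : α} (ha : 0 ≤ a) (hb : 0 ≤ b)
    (hc : 0 ≤ c) : (a + b) ⊓ c ≤ a ⊓ c + b ⊓ c := by
  rw [← sub_le_iff_le_add']
  have key : (a + b) ⊓ c - a ⊓ c = ((a + b) ⊓ c - a) ⊔ ((a + b) ⊓ c - c) := by
    rw [sub_eq_add_neg, neg_inf, add_sup, ← sub_eq_add_neg, ← sub_eq_add_neg]
  rw [key]
  refine sup_le (le_inf ?_ ?_) (le_inf ?_ ?_)
  · exact sub_le_iff_le_add'.mpr inf_le_left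
  · exact (sub_le_self _ ha).trans inf_le_right
  · exact (sub_nonpos.mpr inf_le_right).trans hb
  · exact (sub_nonpos.mpr inf_le_right).trans hc

lemma abs_add_inf_eq_zero [AddLeftMono α] {a b c : α} (hc : 0 ≤ c) (ha : |a| ⊓ c = 0)
    (hb : |b| ⊓ c = 0) : |a + b| ⊓ c = 0 := by
  refine le_antisymm ?_ (le_inf (abs_nonneg _) hc)
  calc |a + b| ⊓ c ≤ (|a| + |b|) ⊓ c := inf_le_inf_right _ (abs_add_le a b)
    _ ≤ |a| ⊓ c + |b| ⊓ c := add_inf_le_inf_add_inf (abs_nonneg a) (abs_nonneg b) hc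
    _ = 0 := by rw [ha, hb, add_zero]

section DisjointComplement

variable {G : Set α} {a b : α}

lemma add_mem_dComp [AddLeftMono α] (ha : a ∈ dComp G) (hb : b ∈ dComp G) : a + b ∈ dComp G :=
  fun g hg ↦ abs_add_inf_eq_zero (abs_nonneg g) (ha g hg) (hb g hg)

lemma neg_mem_dComp (ha : a ∈ dComp G) : -a ∈ dComp G :=
  fun g hg ↦ by rw [abs_neg]; exact ha g hg

lemma sub_mem_dComp [AddLeftMono α] (ha : a ∈ dComp G) (hb : b ∈ dComp G) : a - b ∈ dComp G := by
  rw [sub_eq_add_neg]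
  exact add_mem_dComp ha (neg_mem_dComp hb)

end DisjointComplement

namespace IsIdeal

variable [Module ℝ α] {H : Set α} {f e h m : α}

lemma add_mem (hH : IsIdeal H) (he : e ∈ H) (hf : f ∈ H) : e + f ∈ H :=
  hH.2.1 e f he hf

lemma sub_mem (hH : IsIdeal H) (he : e ∈ H) (hf : f ∈ H) : e - f ∈ H := by
  rw [sub_eq_add_neg, ← neg_one_smul ℝ f]
  exact hH.add_mem he (hH.2.2.1 (-1) f hf)

lemma mem_of_abs_le (hH : IsIdeal H) (he : e ∈ H) (hfe : |f| ≤ |e|) : f ∈ H :=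
  hH.2.2.2.2 f e he hfe

lemma isGreatest_inter_Icc [AddLeftMono α] (hH : IsIdeal H) (hf : 0 ≤ f) (hh : h ∈ H)
    (hub : h ∈ upperBounds (H ∩ Set.Icc 0 f)) :
    IsGreatest (H ∩ Set.Icc 0 f) (h ⊓ f)⁺ := by
  have hnonneg : 0 ≤ (h ⊓ f)⁺ := posPart_nonneg _
  refine ⟨⟨hH.mem_of_abs_le hh ?_, hnonneg, sup_le inf_le_right hf⟩, ?_⟩
  · rw [abs_of_nonneg hnonneg]
    exact sup_le (inf_le_left.trans (le_abs_self h)) (abs_nonneg h)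
  · exact fun g hg ↦ (le_inf (hub hg) hg.2.2).trans (le_posPart _)

lemma sub_mem_dComp_of_isGreatest [AddLeftMono α] (hH : IsIdeal H)
    (hm : IsGreatest (H ∩ Set.Icc 0 f) m) : f - m ∈ dComp H := by
  obtain ⟨⟨hmH, hm0, hmf⟩, hmax⟩ := hm
  have hfm : 0 ≤ f - m := sub_nonneg.mpr hmf
  intro g hg
  rw [abs_of_nonneg hfm]
  set w := (f - m) ⊓ |g|
  have hw0 : 0 ≤ w := le_inf hfm (abs_nonneg g)
  have hwH : w ∈ H := hH.mem_of_abs_le hg (by rw [abs_of_nonneg hw0]; exact inf_le_right)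
  have hmw : m + w ∈ H ∩ Set.Icc 0 f :=
    ⟨hH.add_mem hmH hwH, add_nonneg hm0 hw0, le_sub_iff_add_le'.mp inf_le_left⟩
  exact le_antisymm ((add_le_iff_nonpos_right m).mp (hmax hmw)) hw0

end IsIdeal

end LatticeOrderedGroup

theorem stmt12_general
    (H : Set F) (hH : IsIdeal H)
    (hb : ∀ G ⊆ _root_.posPart H, (∃ a b : F, G ⊆ Set.Icc a b) →
      ∃ h ∈ H, ∀ g ∈ G, g ≤ h) :
    H + dComp H = Set.univ := by
  have hpos : ∀ f : F, 0 ≤ f → ∃ h ∈ H, ∃ d ∈ dComp H, h + d = f := by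
    intro f hf
    obtain ⟨h, hh, hub⟩ :=
      hb (H ∩ Set.Icc 0 f) (fun g hg ↦ ⟨hg.1, hg.2.1⟩) ⟨0, f, Set.inter_subset_right⟩
    have hmax := hH.isGreatest_inter_Icc hf hh hub
    exact ⟨_, hmax.1.1, _, hH.sub_mem_dComp_of_isGreatest hmax, add_sub_cancel _ _⟩
  refine Set.eq_univ_of_forall fun f ↦ ?_
  obtain ⟨h₁, hh₁, d₁, hd₁, hf₁⟩ := hpos f⁺ (posPart_nonneg f)
  obtain ⟨h₂, hh₂, d₂, hd₂, hf₂⟩ := hpos f⁻ (negPart_nonneg f)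
  refine ⟨h₁ - h₂, hH.sub_mem hh₁ hh₂, d₁ - d₂, sub_mem_dComp hd₁ hd₂, ?_⟩
  rw [← posPart_sub_negPart f, ← hf₁, ← hf₂]
  exact sub_add_sub_comm h₁ h₂ d₁ d₂

/-- If every subset of `H⁺` which is order bounded in `F` has an upper bound in `H`,
then the ideal `H` is a projection band. -/
theorem stmt12 (hArch : ∀ f g : F, 0 ≤ f → (∀ n : ℕ, n • g ≤ f) → g ≤ 0)
    (H : Set F) (hH : IsIdeal H)
    (hb : ∀ G ⊆ _root_.posPart H, (∃ a b : F, G ⊆ Set.Icc a b) →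
      ∃ h ∈ H, ∀ g ∈ G, g ≤ h) :
    H + dComp H = Set.univ :=
  stmt12_general H hH hb
end

section
/- Let X be a topological space, E ⊆ C(X) a vector sublattice, and K ⊆ X a compact set contained in supp E = ⋃_{g∈E} {x : g(x) ≠ 0}. Then there exists e ∈ E with e(x) ≥ 1 for all x ∈ K. -/
namespace ContinuousMap

variable {X : Type*} [TopologicalSpace X]

theorem exists_one_lt_apply_of_pos {S : Submodule ℝ C(X, ℝ)} {f : C(X, ℝ)} (hfS : f ∈ S)
    (hf0 : 0 ≤ f) {x : X} (hfx : 0 < f x) : ∃ g ∈ S, 0 ≤ g ∧ 1 < g x := by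
  refine ⟨(2 / f x) • f, S.smul_mem _ hfS, smul_nonneg (by positivity) hf0, ?_⟩
  rw [smul_apply, smul_eq_mul, div_mul_cancel₀ _ hfx.ne']
  norm_num

theorem exists_one_le_on_of_forall_exists_nonneg_pos (S : Submodule ℝ C(X, ℝ)) {K : Set X}
    (hK : IsCompact K) (hpos : ∀ x ∈ K, ∃ f ∈ S, 0 ≤ f ∧ 0 < f x) :
    ∃ e ∈ S, ∀ x ∈ K, 1 ≤ e x := by
  have hbig : ∀ x ∈ K, ∃ g ∈ S, 0 ≤ g ∧ 1 < g x := fun x hx => by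
    obtain ⟨f, hfS, hf0, hfx⟩ := hpos x hx
    exact exists_one_lt_apply_of_pos hfS hf0 hfx
  choose! g hgS hg0 hgx using hbig
  obtain ⟨t, ht⟩ := hK.elim_nhds_subcover' (fun x _ => {y | 1 < g x y})
    fun x hx => (isOpen_lt continuous_const (g x).continuous).mem_nhds (hgx x hx)
  refine ⟨∑ p ∈ t, g p, S.sum_mem fun p _ => hgS p p.2, fun y hy => ?_⟩
  obtain ⟨p, hpt, hpy⟩ := Set.mem_iUnion₂.mp (ht hy)
  calc (1 : ℝ) ≤ g p y := hpy.le
    _ ≤ ∑ q ∈ t, g q y := Finset.single_le_sum (fun (q : K) _ => hg0 q q.2 y) hpt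
    _ = (∑ q ∈ t, g q) y := (sum_apply _ _ _).symm

end ContinuousMap

theorem stmt15_general {X : Type*} [TopologicalSpace X] (E : Set C(X, ℝ))
    (h0 : (0 : C(X, ℝ)) ∈ E)
    (hadd : ∀ f g : C(X, ℝ), f ∈ E → g ∈ E → f + g ∈ E)
    (hsmul : ∀ (c : ℝ) (f : C(X, ℝ)), f ∈ E → c • f ∈ E)
    (hsup : ∀ f g : C(X, ℝ), f ∈ E → g ∈ E → f ⊔ g ∈ E)
    (K : Set X) (hK : IsCompact K) (hKE : K ⊆ ⋃ g ∈ E, {x : X | g x ≠ 0}) :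
    ∃ e ∈ E, ∀ x ∈ K, 1 ≤ e x := by
  let S : Submodule ℝ C(X, ℝ) :=
    { carrier := E, add_mem' := hadd _ _, zero_mem' := h0, smul_mem' := hsmul }
  refine ContinuousMap.exists_one_le_on_of_forall_exists_nonneg_pos S hK fun x hx => ?_
  obtain ⟨g, hgE, hgx⟩ : ∃ g ∈ E, g x ≠ 0 := by simpa using hKE hx
  have habs : |g| ∈ E := hsup g (-g) hgE (neg_one_smul ℝ g ▸ hsmul (-1) g hgE)
  exact ⟨|g|, habs, abs_nonneg g, by simpa [ContinuousMap.abs_apply] using hgx⟩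

/-- If `E` is a vector sublattice of `C(X)` and `K` is a compact subset of
`supp E = ⋃_{g ∈ E} {x : g x ≠ 0}`, then there is `e ∈ E` with `e ≥ 1` on `K`. -/
theorem stmt15 {X : Type*} [TopologicalSpace X] (E : Set C(X, ℝ))
    (h0 : (0 : C(X, ℝ)) ∈ E)
    (hadd : ∀ f g : C(X, ℝ), f ∈ E → g ∈ E → f + g ∈ E)
    (hsmul : ∀ (c : ℝ) (f : C(X, ℝ)), f ∈ E → c • f ∈ E)
    (hsup : ∀ f g : C(X, ℝ), f ∈ E → g ∈ E → f ⊔ g ∈ E)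
    (hinf : ∀ f g : C(X, ℝ), f ∈ E → g ∈ E → f ⊓ g ∈ E)
    (K : Set X) (hK : IsCompact K) (hKE : K ⊆ ⋃ g ∈ E, {x : X | g x ≠ 0}) :
    ∃ e ∈ E, ∀ x ∈ K, 1 ≤ e x :=
  stmt15_general E h0 hadd hsmul hsup K hK hKE
end

section
/- Let X be a Tychonoff (completely regular Hausdorff) space. Then X is normal if and only if for every pair of open sets U, V ⊆ X with U ∪ V = X one has C(X;U) + C(X;V) = C(X), where C(X;U) = {f ∈ C(X) : supp f ⊆ U}. -/
open Pointwise

/-- A Tychonoff space `X` is normal iff for every pair of open sets `U, V` with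
`U ∪ V = X` one has `C(X;U) + C(X;V) = C(X)`, where `C(X;U)` is the ideal of
continuous functions vanishing outside `U`. -/
theorem stmt16 {X : Type*} [TopologicalSpace X] [CompletelyRegularSpace X] [T1Space X] :
    NormalSpace X ↔
      ∀ U V : Set X, IsOpen U → IsOpen V → U ∪ V = Set.univ →
        {f : C(X, ℝ) | ∀ x ∉ U, f x = 0} + {f : C(X, ℝ) | ∀ x ∉ V, f x = 0} =
          Set.univ := by
  constructor
  · intro hn U V hU hV hUV
    ext f
    simp only [Set.mem_univ, iff_true]
    have hdisj : Disjoint Uᶜ Vᶜ := by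
      rw [Set.disjoint_compl_left_iff_subset]
      intro x hx
      have : x ∈ U ∪ V := hUV ▸ Set.mem_univ x
      rcases this with h | h
      · exact h
      · exact absurd h hx
    obtain ⟨φ, hφ0, hφ1, _⟩ := exists_continuous_zero_one_of_isClosed hU.isClosed_compl
      hV.isClosed_compl hdisj
    refine Set.mem_add.mpr ⟨φ * f, ?_, (1 - φ) * f, ?_, ?_⟩
    · intro x hx
      have : φ x = 0 := hφ0 hx
      simp [this]
    · intro x hx
      have : φ x = 1 := hφ1 hx
      simp [this]
    · ext x; simp; ring
  · intro h
    constructor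
    intro A B hA hB hAB
    have hcov : Bᶜ ∪ Aᶜ = Set.univ := by
      rw [← Set.compl_inter, Set.compl_univ_iff]
      exact Set.disjoint_iff_inter_eq_empty.mp hAB.symm
    have h1 : (1 : C(X, ℝ)) ∈ {f : C(X, ℝ) | ∀ x ∉ Bᶜ, f x = 0} +
        {f : C(X, ℝ) | ∀ x ∉ Aᶜ, f x = 0} := by
      rw [h Bᶜ Aᶜ hB.isOpen_compl hA.isOpen_compl hcov]
      trivial
    obtain ⟨g, hg, k, hk, hgk⟩ := Set.mem_add.mp h1
    refine ⟨{x | g x > 1/2}, {x | g x < 1/2}, isOpen_lt continuous_const g.continuous,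
      isOpen_lt g.continuous continuous_const, ?_, ?_, ?_⟩
    · intro x hx
      have hkx : k x = 0 := hk x (by simpa using hx)
      have : g x + k x = 1 := by
        have := congrArg (fun f : C(X, ℝ) => f x) hgk
        simpa using this
      simp only [Set.mem_setOf_eq]
      rw [hkx, add_zero] at this
      linarith
    · intro x hx
      have hgx : g x = 0 := hg x (by simpa using hx)
      simp only [Set.mem_setOf_eq]
      rw [hgx]; norm_num
    · apply Set.disjoint_left.mpr
      intro x hx hx'
      simp only [Set.mem_setOf_eq] at hx hx'
      linarith
end

section
/- Let X be a Tychonoff space and f ∈ C(X). If the principal ideal I_f generated by f in C(X) is closed in the compact-open topology, then supp f = {x : f(x) ≠ 0} is a clopen subset of X. -/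
open Filter Topology

/-- If the principal ideal `I_f = {g : |g| ≤ α|f| for some α ≥ 0}` generated by
`f ∈ C(X)` is closed in the compact-open topology, then `supp f = {x : f x ≠ 0}`
is clopen. -/
theorem stmt17 {X : Type*} [TopologicalSpace X] [CompletelyRegularSpace X] [T1Space X]
    (f : C(X, ℝ))
    (hcl : IsClosed {g : C(X, ℝ) | ∃ α : ℝ, 0 ≤ α ∧ |g| ≤ α • |f|}) :
    IsClopen {x : X | f x ≠ 0} := by
  have hopen : IsOpen {x : X | f x ≠ 0} := by
    have : {x : X | f x ≠ 0} = f ⁻¹' ({0}ᶜ) := rfl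
    rw [this]
    exact isOpen_compl_singleton.preimage f.continuous
  -- the candidate limit: √|f|
  have hgc : Continuous fun x => Real.sqrt |f x| :=
    Real.continuous_sqrt.comp (continuous_abs.comp f.continuous)
  set g : C(X, ℝ) := ⟨fun x => Real.sqrt |f x|, hgc⟩ with hg
  -- approximating sequence
  have hGc : ∀ n : ℕ, Continuous fun x => max (Real.sqrt |f x| - 1 / (n + 1)) 0 := by
    intro n
    exact (hgc.sub continuous_const).max continuous_const
  set G : ℕ → C(X, ℝ) := fun n => ⟨_, hGc n⟩ with hG
  have hmem : ∀ n : ℕ, G n ∈ {g : C(X, ℝ) | ∃ α : ℝ, 0 ≤ α ∧ |g| ≤ α • |f|} := by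
    intro n
    refine ⟨(n : ℝ) + 1, by positivity, fun x => ?_⟩
    show |max (Real.sqrt |f x| - 1 / ((n : ℝ) + 1)) 0| ≤ ((n : ℝ) + 1) * |f x|
    rw [abs_of_nonneg (le_max_right _ _)]
    rcases le_or_gt (Real.sqrt |f x|) (1 / ((n : ℝ) + 1)) with h | h
    · rw [max_eq_right (by linarith)]
      positivity
    · have hε : (0 : ℝ) < 1 / ((n : ℝ) + 1) := by positivity
      have hs : 0 < Real.sqrt |f x| := lt_trans hε h
      have key : Real.sqrt |f x| ≤ ((n : ℝ) + 1) * |f x| := by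
        have h1 : Real.sqrt |f x| * Real.sqrt |f x| = |f x| :=
          Real.mul_self_sqrt (abs_nonneg _)
        have h2 : 1 / ((n : ℝ) + 1) * Real.sqrt |f x| ≤ |f x| := by
          calc 1 / ((n : ℝ) + 1) * Real.sqrt |f x|
              ≤ Real.sqrt |f x| * Real.sqrt |f x| := by
                apply mul_le_mul_of_nonneg_right h.le hs.le
            _ = |f x| := h1
        rw [div_mul_eq_mul_div, one_mul, div_le_iff₀ (by positivity)] at h2
        linarith [h2]
      have : max (Real.sqrt |f x| - 1 / ((n : ℝ) + 1)) 0 ≤ Real.sqrt |f x| :=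
        max_le (by linarith) hs.le
      linarith
  -- uniform convergence G n → g
  have htend : Tendsto G atTop (𝓝 g) := by
    rw [ContinuousMap.tendsto_iff_forall_isCompact_tendstoUniformlyOn]
    intro K hK
    apply TendstoUniformlyOn.mono (s := Set.univ) _ (Set.subset_univ K)
    rw [Metric.tendstoUniformlyOn_iff]
    intro ε hε
    obtain ⟨N, hN⟩ := exists_nat_gt (1 / ε)
    filter_upwards [eventually_ge_atTop N] with n hn x _
    have h1 : 1 / ((n : ℝ) + 1) < ε := by
      rw [div_lt_iff₀ (by positivity)]
      have : 1 / ε < (n : ℝ) + 1 := lt_of_lt_of_le hN (by exact_mod_cast le_of_lt (Nat.lt_succ_of_le hn))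
      rw [div_lt_iff₀ hε] at this
      linarith
    have h2 : |g x - G n x| ≤ 1 / ((n : ℝ) + 1) := by
      simp only [hg, hG, ContinuousMap.coe_mk]
      rw [abs_le]
      constructor
      · have : max (Real.sqrt |f x| - 1 / ((n : ℝ) + 1)) 0 ≤ Real.sqrt |f x| :=
          max_le (by linarith [one_div_pos.mpr (by positivity : (0:ℝ) < (n:ℝ)+1)])
            (Real.sqrt_nonneg _)
        have hε' : (0 : ℝ) ≤ 1 / ((n : ℝ) + 1) := by positivity
        linarith
      · have : Real.sqrt |f x| - 1 / ((n : ℝ) + 1) ≤ max (Real.sqrt |f x| - 1 / ((n : ℝ) + 1)) 0 :=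
          le_max_left _ _
        linarith
    rw [Real.dist_eq]
    exact lt_of_le_of_lt h2 h1
  have hglim : g ∈ {g : C(X, ℝ) | ∃ α : ℝ, 0 ≤ α ∧ |g| ≤ α • |f|} :=
    hcl.mem_of_tendsto htend (Eventually.of_forall hmem)
  obtain ⟨α, hα0, hαle⟩ := hglim
  rcases eq_or_lt_of_le hα0 with rfl | hαpos
  · -- α = 0 : f is identically 0
    have hzero : ∀ x, f x = 0 := by
      intro x
      have hle : Real.sqrt |f x| ≤ 0 := by
        have h0 := hαle x
        simpa [hg, abs_of_nonneg (Real.sqrt_nonneg _)] using h0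
      have h1 : Real.sqrt |f x| = 0 := le_antisymm hle (Real.sqrt_nonneg _)
      have := Real.sqrt_eq_zero (abs_nonneg _) |>.mp h1
      exact abs_eq_zero.mp this
    have : {x : X | f x ≠ 0} = ∅ := by
      ext x; simp [hzero x]
    rw [this]
    exact isClopen_empty
  · -- α > 0 : supp f = {x | 1/α² ≤ |f x|}
    have hclosed : IsClosed {x : X | f x ≠ 0} := by
      have heq : {x : X | f x ≠ 0} = (fun x => |f x|) ⁻¹' (Set.Ici (1 / α ^ 2)) := by
        ext x
        simp only [Set.mem_setOf_eq, Set.mem_preimage, Set.mem_Ici]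
        constructor
        · intro hx
          have habs : 0 < |f x| := abs_pos.mpr hx
          have h1 : Real.sqrt |f x| ≤ α * |f x| := by
            have h0 := hαle x
            simpa [hg, abs_of_nonneg (Real.sqrt_nonneg _)] using h0
          -- √|f x| ≤ α |f x|, |f x| > 0
          have hs : 0 < Real.sqrt |f x| := Real.sqrt_pos.mpr habs
          have h2 : Real.sqrt |f x| * Real.sqrt |f x| = |f x| :=
            Real.mul_self_sqrt (abs_nonneg _)
          -- 1 ≤ α √|f x|
          have h3 : 1 ≤ α * Real.sqrt |f x| := by
            nlinarith
          have h4 : 1 / α ≤ Real.sqrt |f x| := by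
            rw [div_le_iff₀ hαpos]
            linarith
          calc 1 / α ^ 2 = (1 / α) * (1 / α) := by ring
            _ ≤ Real.sqrt |f x| * Real.sqrt |f x| := by
                apply mul_le_mul h4 h4 (by positivity) hs.le
            _ = |f x| := h2
        · intro hx
          have : 0 < |f x| := lt_of_lt_of_le (by positivity) hx
          exact abs_pos.mp this
      rw [heq]
      exact IsClosed.preimage (continuous_abs.comp f.continuous) isClosed_Ici
    exact ⟨hclosed, hopen⟩
end

section
/- Let K be a compact Hausdorff space. Then K is extremally disconnected if and only if every band in C(K) is a projection band (i.e., C(K) has the projection property). -/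
open Pointwise

/-- A subset of a vector lattice of continuous functions is solid if it is nonempty
and `|f| ≤ |e|`, `e ∈ E` imply `f ∈ E`. -/
def SolidC {X : Type*} [TopologicalSpace X] (E : Set C(X, ℝ)) : Prop :=
  E.Nonempty ∧ ∀ f e : C(X, ℝ), e ∈ E → |f| ≤ |e| → f ∈ E

/-- An ideal of `C(X)`: a solid linear subspace. -/
def IsIdealC {X : Type*} [TopologicalSpace X] (E : Set C(X, ℝ)) : Prop :=
  (0 : C(X, ℝ)) ∈ E ∧ (∀ x y : C(X, ℝ), x ∈ E → y ∈ E → x + y ∈ E) ∧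
    (∀ (c : ℝ) (x : C(X, ℝ)), x ∈ E → c • x ∈ E) ∧ SolidC E

/-- The disjoint complement of a set of continuous functions. -/
def dCompC {X : Type*} [TopologicalSpace X] (G : Set C(X, ℝ)) : Set C(X, ℝ) :=
  {g : C(X, ℝ) | ∀ h ∈ G, |g| ⊓ |h| = 0}

/-- Disjointness in `C(X,ℝ)` is pointwise disjointness. -/
lemma disj_iff_aux19 {X : Type*} [TopologicalSpace X] (f g : C(X, ℝ)) :
    |f| ⊓ |g| = 0 ↔ ∀ x, f x = 0 ∨ g x = 0 := by
  constructor
  · intro h x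
    have hx : min |f x| |g x| = 0 := by
      have := congrFun (congrArg DFunLike.coe h) x
      simpa [ContinuousMap.inf_apply, ContinuousMap.abs_apply] using this
    rcases min_cases |f x| |g x| with ⟨he, -⟩ | ⟨he, -⟩
    · exact Or.inl (abs_eq_zero.mp (he ▸ hx))
    · exact Or.inr (abs_eq_zero.mp (he ▸ hx))
  · intro h
    ext x
    rcases h x with h | h <;>
      simp [ContinuousMap.inf_apply, ContinuousMap.abs_apply, h]

/-- Urysohn: a point off a closed set can be separated by a continuous function. -/
lemma urysohn_aux19 {X : Type*} [TopologicalSpace X] [CompactSpace X] [T2Space X]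
    {F : Set X} (hF : IsClosed F) {x : X} (hx : x ∉ F) :
    ∃ g : C(X, ℝ), g x = 1 ∧ ∀ y ∈ F, g y = 0 := by
  obtain ⟨g, h0, h1, -⟩ := exists_continuous_zero_one_of_isClosed hF isClosed_singleton
    (Set.disjoint_singleton_right.mpr hx)
  exact ⟨g, h1 rfl, fun y hy => h0 hy⟩

/-- A compact Hausdorff space `K` is extremally disconnected iff every band in
`C(K)` is a projection band, i.e. `C(K)` has the projection property. -/
theorem stmt19 {K : Type*} [TopologicalSpace K] [CompactSpace K] [T2Space K] :
    ExtremallyDisconnected K ↔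
      ∀ E : Set C(K, ℝ), IsIdealC E → E = dCompC (dCompC E) →
        E + dCompC E = Set.univ := by
  constructor
  · -- extremally disconnected implies projection property
    intro hED E _ hband
    classical
    set U : Set K := ⋃ e ∈ E, {x | e x ≠ 0} with hUdef
    have hUopen : IsOpen U := by
      refine isOpen_biUnion fun e _ => ?_
      have : {x | e x ≠ 0} = e ⁻¹' ({0}ᶜ) := by ext x; simp
      rw [this]
      exact isOpen_compl_singleton.preimage e.continuous
    set A := closure U with hAdef
    have hAclopen : IsClopen A := ⟨isClosed_closure, hED.open_closure U hUopen⟩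
    -- anything disjoint from E vanishes on A
    have hkey : ∀ g ∈ dCompC E, ∀ x ∈ A, g x = 0 := by
      intro g hg x hx
      have hzU : U ⊆ g ⁻¹' {0} := by
        intro y hy
        simp only [hUdef, Set.mem_iUnion, Set.mem_setOf_eq] at hy
        obtain ⟨e, he, hey⟩ := hy
        rcases (disj_iff_aux19 g e).mp (hg e he) y with h | h
        · exact h
        · exact absurd h hey
      exact closure_minimal hzU (isClosed_singleton.preimage g.continuous) hx
    -- anything vanishing off U is disjoint from dCompC E
    have hmemA : U ⊆ A := subset_closure
    refine Set.eq_univ_iff_forall.mpr fun h => ?_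
    -- decompose h using the clopen set A
    have hcont : Continuous (A.piecewise (⇑h) 0) :=
      Continuous.piecewise (by simp [hAclopen.frontier_eq]) h.continuous continuous_const
    set f₁ : C(K, ℝ) := ⟨A.piecewise (⇑h) 0, hcont⟩ with hf₁def
    have hf₁mem : f₁ ∈ E := by
      rw [hband]
      intro g hg
      refine (disj_iff_aux19 f₁ g).mpr fun x => ?_
      by_cases hx : x ∈ A
      · exact Or.inr (hkey g hg x hx)
      · left
        show A.piecewise (⇑h) 0 x = 0
        simp [Set.piecewise_eq_of_notMem _ _ _ hx]
    have hf₂mem : h - f₁ ∈ dCompC E := by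
      intro e he
      refine (disj_iff_aux19 (h - f₁) e).mpr fun x => ?_
      by_cases hx : x ∈ A
      · left
        have : f₁ x = h x := by
          show A.piecewise (⇑h) 0 x = h x
          simp [Set.piecewise_eq_of_mem _ _ _ hx]
        simp [ContinuousMap.sub_apply, this]
      · right
        by_contra hex
        exact hx (hmemA (Set.mem_biUnion he hex))
    rw [Set.mem_add]
    exact ⟨f₁, hf₁mem, h - f₁, hf₂mem, by ring⟩
  · -- projection property implies extremally disconnected
    intro hP
    constructor
    intro U hUopen
    set F := closure U with hFdef
    have hFclosed : IsClosed F := isClosed_closure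
    set E : Set C(K, ℝ) := {f | ∀ x ∉ F, f x = 0} with hEdef
    have hzero : ∀ f ∈ E, ∀ g : C(K, ℝ), (∀ y ∈ F, g y = 0) → |g| ⊓ |f| = 0 := by
      intro f hf g hg
      refine (disj_iff_aux19 g f).mpr fun x => ?_
      by_cases hx : x ∈ F
      · exact Or.inl (hg x hx)
      · exact Or.inr (hf x hx)
    have hideal : IsIdealC E := by
      refine ⟨fun x _ => rfl, ?_, ?_, ⟨0, fun x _ => rfl⟩, ?_⟩
      · intro a b ha hb x hx
        simp [ContinuousMap.add_apply, ha x hx, hb x hx]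
      · intro c a ha x hx
        simp [ContinuousMap.smul_apply, ha x hx]
      · intro f e he hle x hx
        have h1 : |f x| ≤ |e x| := by
          have := ContinuousMap.le_def.mp hle x
          simpa [ContinuousMap.abs_apply] using this
        rw [he x hx, abs_zero] at h1
        exact abs_eq_zero.mp (le_antisymm h1 (abs_nonneg _))
    have hband : E = dCompC (dCompC E) := by
      apply Set.Subset.antisymm
      · intro f hf g hg
        refine (disj_iff_aux19 f g).mpr fun x => ?_
        exact ((disj_iff_aux19 g f).mp (hg f hf) x).symm
      · intro f hf x hx
        by_contra hfx
        obtain ⟨g, hg1, hg0⟩ := urysohn_aux19 hFclosed hx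
        have hgE : g ∈ dCompC E := fun e he => hzero e he g hg0
        rcases (disj_iff_aux19 f g).mp (hf g hgE) x with h | h
        · exact hfx h
        · rw [hg1] at h; exact one_ne_zero h
    have huniv := hP E hideal hband
    have h1mem : (1 : C(K, ℝ)) ∈ E + dCompC E := huniv ▸ Set.mem_univ _
    rw [Set.mem_add] at h1mem
    obtain ⟨f, hf, g, hg, hfg⟩ := h1mem
    -- g vanishes on F
    have hgU : U ⊆ g ⁻¹' {0} := by
      intro x hxU
      obtain ⟨e, he1, he0⟩ := urysohn_aux19 (isOpen_compl_iff.mp (by simpa using hUopen))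
        (by simpa using hxU : x ∉ Uᶜ)
      have heE : e ∈ E := by
        intro y hy
        exact he0 y fun hyU => hy (subset_closure hyU)
      rcases (disj_iff_aux19 g e).mp (hg e heE) x with h | h
      · exact h
      · rw [he1] at h; exact absurd h one_ne_zero
    have hgF : ∀ x ∈ F, g x = 0 :=
      fun x hx => closure_minimal hgU (isClosed_singleton.preimage g.continuous) hx
    -- F is the cozero set of f
    have hFeq : F = f ⁻¹' ({0}ᶜ) := by
      ext x
      constructor
      · intro hx
        have : f x + g x = 1 := by
          have := congrFun (congrArg DFunLike.coe hfg) x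
          simpa [ContinuousMap.add_apply] using this
        rw [hgF x hx, add_zero] at this
        simp [this]
      · intro hx
        by_contra hxF
        exact hx (hf x hxF)
    show IsOpen F
    rw [hFeq]
    exact isOpen_compl_singleton.preimage f.continuous
end
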